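/- Let f : ℝⁿ → ℝ be a nonconstant polynomial and 𝒫(x) = Σ_{α ∈ Γ(f) ∩ ℤ₊ⁿ} |x^α|. If there exist constants c₁, c₂, R > 0 with c₁𝒫(x) ≤ f(x) ≤ c₂𝒫(x) for all ‖x‖ > R, then f is non-degenerate at infinity and f(x) ≥ 0 for all ‖x‖ > R. -/

import Mathlib

open MvPolynomial Set Asymptotics Filter

/-- The exponent vector of a monomial, viewed in `ℝⁿ`. -/
noncomputable def expR {n : ℕ} (α : Fin n →₀ ℕ) : Fin n → ℝ := fun i => (α i : ℝ)

/-- The Newton polyhedron (at infinity) of a polynomial: the convex hull of its exponents. -/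
noncomputable def Newton {n : ℕ} (f : MvPolynomial (Fin n) ℝ) : Set (Fin n → ℝ) :=
  convexHull ℝ (expR '' (f.support : Set (Fin n →₀ ℕ)))

/-- `d(q, Γ(f))`: the minimal value of `⟨q, ·⟩` on the Newton polyhedron. -/
noncomputable def dMin {n : ℕ} (q : Fin n → ℝ) (f : MvPolynomial (Fin n) ℝ) : ℝ :=
  sInf ((fun α : Fin n → ℝ => ∑ i, q i * α i) '' Newton f)

/-- `Δ(q, Γ(f))`: the face of the Newton polyhedron where `⟨q, ·⟩` attains its minimum. -/
noncomputable def face {n : ℕ} (q : Fin n → ℝ) (f : MvPolynomial (Fin n) ℝ) : Set (Fin n → ℝ) :=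
  {α ∈ Newton f | ∑ i, q i * α i = dMin q f}

/-- The Newton boundary at infinity: faces `Δ(q, Γ(f))` with `min_j q_j < 0`. -/
noncomputable def NewtonBoundary {n : ℕ} (f : MvPolynomial (Fin n) ℝ) : Set (Set (Fin n → ℝ)) :=
  {Δ | ∃ q : Fin n → ℝ, (∃ j, q j < 0) ∧ Δ = face q f}

open Classical in
/-- The truncation `f_Δ` of `f` to a face `Δ`. -/
noncomputable def trunc {n : ℕ} (f : MvPolynomial (Fin n) ℝ) (Δ : Set (Fin n → ℝ)) :
    MvPolynomial (Fin n) ℝ :=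
  ∑ α ∈ f.support.filter (fun α => expR α ∈ Δ), monomial α (f.coeff α)

/-- `𝒫(x) = Σ_{α ∈ Γ(f) ∩ ℤ₊ⁿ} |x^α|`. -/
noncomputable def P {n : ℕ} (f : MvPolynomial (Fin n) ℝ) (x : Fin n → ℝ) : ℝ :=
  ∑' α : {α : Fin n →₀ ℕ // expR α ∈ Newton f}, |∏ i, x i ^ ((α : Fin n →₀ ℕ) i)|

/-- Non-degeneracy at infinity. -/
def Nondeg {n : ℕ} (f : MvPolynomial (Fin n) ℝ) : Prop :=
  ∀ Δ ∈ NewtonBoundary f, ¬ ∃ x : Fin n → ℝ, (∀ i, x i ≠ 0) ∧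
    eval x (trunc f Δ) = 0 ∧ ∀ i, eval x (pderiv i (trunc f Δ)) = 0

/-- The norm of a polynomial: the maximum of the absolute values of its coefficients. -/
noncomputable def polyNorm {n : ℕ} (f : MvPolynomial (Fin n) ℝ) : ℝ :=
  ⨆ α ∈ f.support, |f.coeff α|

/-- Stable compactness of the zero set of `f`. -/
def StablyCompact {n : ℕ} (f : MvPolynomial (Fin n) ℝ) : Prop :=
  ∃ ε > 0, ∀ g : MvPolynomial (Fin n) ℝ, Newton g ⊆ Newton f → polyNorm g < ε →
    IsCompact {x : Fin n → ℝ | eval x (f + g) = 0}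


/-!
Fix `q` with some `q j < 0`, put `d = d(q, Γ(f))`, and let `x` have no zero coordinate. Along
`φ(t) = (x₁ t^{q₁}, …, xₙ t^{qₙ})` the norm tends to infinity as `t → 0⁺`, every monomial `x^α`
of `f` becomes `x^α t^{⟨q, α⟩}` with `⟨q, α⟩ ≥ d`, so `f(φ(t)) / t^d → f_Δ(x)`. On the other hand
`𝒫(φ(t)) ≥ |x^α| t^d` for an exponent `α` of `f` on `Δ`. Dividing `c₁ 𝒫 ≤ f` by `t^d` and letting
`t → 0⁺` gives `f_Δ(x) ≥ c₁ |x^α| > 0`.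
-/

open Topology

section NewtonPolyhedron

variable {n : ℕ} {f : MvPolynomial (Fin n) ℝ}

lemma expR_mem_Newton {α : Fin n →₀ ℕ} (hα : α ∈ f.support) : expR α ∈ Newton f :=
  subset_convexHull ℝ _ ⟨α, hα, rfl⟩

lemma finite_setOf_expR_mem_Newton (f : MvPolynomial (Fin n) ℝ) :
    {α : Fin n →₀ ℕ | expR α ∈ Newton f}.Finite := by
  obtain ⟨M, hM⟩ :=
    (((f.support.finite_toSet).image expR).isCompact_convexHull ℝ).isBounded.exists_norm_le
  have hbox : {α : Fin n →₀ ℕ | ∀ i, α i ≤ ⌊M⌋₊}.Finite :=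
    (Set.Finite.pi' fun _ : Fin n => Set.finite_Iic ⌊M⌋₊).preimage DFunLike.coe_injective.injOn
  refine hbox.subset fun α hα i => Nat.le_floor ?_
  calc (α i : ℝ) = ‖expR α i‖ := (Real.norm_natCast _).symm
    _ ≤ ‖expR α‖ := norm_le_pi_norm _ i
    _ ≤ M := hM _ hα

lemma abs_prod_pow_le_P (x : Fin n → ℝ) {α : Fin n →₀ ℕ} (hα : α ∈ f.support) :
    |∏ i, x i ^ α i| ≤ P f x := by
  have : Finite {β : Fin n →₀ ℕ // expR β ∈ Newton f} :=
    (finite_setOf_expR_mem_Newton f).to_subtype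
  exact Summable.of_finite.le_tsum (L := SummationFilter.unconditional _)
    (f := fun β : {β : Fin n →₀ ℕ // expR β ∈ Newton f} => |∏ i, x i ^ (β : Fin n →₀ ℕ) i|)
    ⟨α, expR_mem_Newton hα⟩ fun _ _ => abs_nonneg _

lemma P_nonneg (f : MvPolynomial (Fin n) ℝ) (x : Fin n → ℝ) : 0 ≤ P f x :=
  tsum_nonneg fun _ => abs_nonneg _

lemma dMin_eq_inf' (q : Fin n → ℝ) (hf : f.support.Nonempty) :
    dMin q f = f.support.inf' hf fun α => ∑ i, q i * expR α i := by
  set m := f.support.inf' hf fun α => ∑ i, q i * expR α i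
  have hlow : Newton f ⊆ {y | m ≤ ∑ i, q i * y i} :=
    convexHull_min
      (by rintro _ ⟨α, hα, rfl⟩; exact Finset.inf'_le (fun α => ∑ i, q i * expR α i) hα)
      (convex_halfSpace_ge (dotProductEquiv ℝ (Fin n) q).isLinear m)
  obtain ⟨α, hα, hαm⟩ := Finset.exists_mem_eq_inf' hf fun α => ∑ i, q i * expR α i
  refine IsLeast.csInf_eq ⟨⟨expR α, expR_mem_Newton hα, hαm.symm⟩, ?_⟩
  rintro _ ⟨y, hy, rfl⟩
  exact hlow hy

lemma dMin_le (q : Fin n → ℝ) {α : Fin n →₀ ℕ} (hα : α ∈ f.support) :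
    dMin q f ≤ ∑ i, q i * expR α i :=
  (dMin_eq_inf' q ⟨α, hα⟩).trans_le (Finset.inf'_le _ hα)

lemma exists_mem_support_eq_dMin (q : Fin n → ℝ) (hf : f.support.Nonempty) :
    ∃ α ∈ f.support, ∑ i, q i * expR α i = dMin q f := by
  obtain ⟨α, hα, hαm⟩ := Finset.exists_mem_eq_inf' hf fun α => ∑ i, q i * expR α i
  exact ⟨α, hα, (dMin_eq_inf' q hf ▸ hαm).symm⟩

lemma expR_mem_face_iff {q : Fin n → ℝ} {α : Fin n →₀ ℕ} (hα : α ∈ f.support) :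
    expR α ∈ face q f ↔ ∑ i, q i * expR α i = dMin q f :=
  and_iff_right (expR_mem_Newton hα)

end NewtonPolyhedron

section MonomialCurve

variable {n : ℕ}

noncomputable def monomialCurve (x q : Fin n → ℝ) (t : ℝ) : Fin n → ℝ := fun i => x i * t ^ q i

lemma prod_monomialCurve_pow (x q : Fin n → ℝ) {t : ℝ} (ht : 0 < t) (α : Fin n →₀ ℕ) :
    ∏ i, monomialCurve x q t i ^ α i = (∏ i, x i ^ α i) * t ^ ∑ i, q i * expR α i := by
  simp only [monomialCurve, mul_pow, Finset.prod_mul_distrib, Real.rpow_sum_of_pos ht]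
  congr 1
  refine Finset.prod_congr rfl fun i _ => ?_
  rw [expR, ← Real.rpow_natCast, ← Real.rpow_mul ht.le]

lemma eval_monomialCurve (f : MvPolynomial (Fin n) ℝ) (x q : Fin n → ℝ) {t : ℝ} (ht : 0 < t) :
    eval (monomialCurve x q t) f =
      ∑ α ∈ f.support, f.coeff α * (∏ i, x i ^ α i) * t ^ ∑ i, q i * expR α i := by
  rw [eval_eq']
  refine Finset.sum_congr rfl fun α _ => ?_
  rw [prod_monomialCurve_pow x q ht, mul_assoc]

lemma tendsto_norm_monomialCurve {x q : Fin n → ℝ} {j : Fin n} (hx : x j ≠ 0) (hq : q j < 0) :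
    Tendsto (fun t => ‖monomialCurve x q t‖) (𝓝[>] 0) atTop := by
  refine tendsto_atTop_mono' _ ?_
    ((tendsto_rpow_neg_nhdsGT_zero hq).const_mul_atTop (abs_pos.mpr hx))
  filter_upwards [self_mem_nhdsWithin] with t (ht : 0 < t)
  calc |x j| * t ^ q j = ‖monomialCurve x q t j‖ := by
        rw [monomialCurve, Real.norm_eq_abs, abs_mul, abs_of_pos (Real.rpow_pos_of_pos ht _)]
    _ ≤ ‖monomialCurve x q t‖ := norm_le_pi_norm _ j

lemma tendsto_eval_monomialCurve_div_rpow_dMin (f : MvPolynomial (Fin n) ℝ) (x q : Fin n → ℝ) :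
    Tendsto (fun t => eval (monomialCurve x q t) f / t ^ dMin q f) (𝓝[>] 0)
      (𝓝 (eval x (trunc f (face q f)))) := by
  set m := dMin q f
  set c : (Fin n →₀ ℕ) → ℝ := fun α => f.coeff α * ∏ i, x i ^ α i
  set e : (Fin n →₀ ℕ) → ℝ := fun α => ∑ i, q i * expR α i - m
  have heval : ∀ t > 0, eval (monomialCurve x q t) f / t ^ m = ∑ α ∈ f.support, c α * t ^ e α := by
    intro t ht
    rw [eval_monomialCurve f x q ht, Finset.sum_div]
    refine Finset.sum_congr rfl fun α _ => ?_
    rw [Real.rpow_sub ht, mul_div_assoc]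
  have hlim : Tendsto (fun t => ∑ α ∈ f.support, c α * t ^ e α) (𝓝[>] 0)
      (𝓝 (∑ α ∈ f.support, c α * 0 ^ e α)) :=
    tendsto_finsetSum _ fun α hα => tendsto_const_nhds.mul <|
      (Real.continuousAt_rpow_const 0 _ (Or.inr (sub_nonneg.mpr (dMin_le q hα)))).tendsto.mono_left
        nhdsWithin_le_nhds
  have htrunc : ∑ α ∈ f.support, c α * 0 ^ e α = eval x (trunc f (face q f)) := by
    rw [trunc, map_sum, Finset.sum_filter]
    refine Finset.sum_congr rfl fun α hα => ?_
    rw [eval_monomial, Finsupp.prod_pow]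
    split_ifs with hface
    · rw [show e α = 0 from sub_eq_zero.mpr ((expR_mem_face_iff hα).mp hface), Real.rpow_zero,
        mul_one]
    · rw [Real.zero_rpow (sub_ne_zero.mpr fun h => hface ((expR_mem_face_iff hα).mpr h)), mul_zero]
  rw [← htrunc]
  exact hlim.congr' (eventually_nhdsWithin_of_forall fun t ht => (heval t ht).symm)

end MonomialCurve

theorem eval_trunc_face_pos {n : ℕ} {f : MvPolynomial (Fin n) ℝ} (hf : f ≠ 0) {c R : ℝ}
    (hc : 0 < c) (hbound : ∀ x : Fin n → ℝ, R < ‖x‖ → c * P f x ≤ eval x f)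
    {q : Fin n → ℝ} (hq : ∃ j, q j < 0) {x : Fin n → ℝ} (hx : ∀ i, x i ≠ 0) :
    0 < eval x (trunc f (face q f)) := by
  obtain ⟨j, hqj⟩ := hq
  obtain ⟨α, hα, hαm⟩ := exists_mem_support_eq_dMin q (support_nonempty.mpr hf)
  set X := ∏ i, x i ^ α i
  have hX : 0 < |X| := abs_pos.mpr (Finset.prod_ne_zero_iff.mpr fun i _ => pow_ne_zero _ (hx i))
  have hlower : ∀ᶠ t in 𝓝[>] 0, c * |X| ≤ eval (monomialCurve x q t) f / t ^ dMin q f := by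
    filter_upwards [(tendsto_norm_monomialCurve (hx j) hqj).eventually_gt_atTop R,
      self_mem_nhdsWithin] with t hR (ht : 0 < t)
    have htm : 0 < t ^ dMin q f := Real.rpow_pos_of_pos ht _
    rw [le_div_iff₀ htm]
    calc c * |X| * t ^ dMin q f = c * |∏ i, monomialCurve x q t i ^ α i| := by
          rw [prod_monomialCurve_pow x q ht, hαm, abs_mul, abs_of_pos htm, mul_assoc]
      _ ≤ c * P f (monomialCurve x q t) := by gcongr; exact abs_prod_pow_le_P _ hα
      _ ≤ eval (monomialCurve x q t) f := hbound _ hR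
  exact (mul_pos hc hX).trans_le
    (ge_of_tendsto (tendsto_eval_monomialCurve_div_rpow_dMin f x q) hlower)

theorem stmt9_general {n : ℕ} (f : MvPolynomial (Fin n) ℝ) (hf : f.totalDegree ≠ 0)
    (c₁ c₂ R : ℝ) (hc₁ : 0 < c₁)
    (hbound : ∀ x : Fin n → ℝ, R < ‖x‖ →
      c₁ * P f x ≤ eval x f ∧ eval x f ≤ c₂ * P f x) :
    Nondeg f ∧ ∀ x : Fin n → ℝ, R < ‖x‖ → 0 ≤ eval x f := by
  have hf₀ : f ≠ 0 := by rintro rfl; exact hf totalDegree_zero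
  refine ⟨?_, fun x hx => (mul_nonneg hc₁.le (P_nonneg f x)).trans (hbound x hx).1⟩
  rintro _ ⟨q, hq, rfl⟩ ⟨x, hx, hzero, -⟩
  exact (eval_trunc_face_pos hf₀ hc₁ (fun x hx => (hbound x hx).1) hq hx).ne' hzero

theorem stmt9 {n : ℕ} (f : MvPolynomial (Fin n) ℝ) (hf : f.totalDegree ≠ 0)
    (c₁ c₂ R : ℝ) (hc₁ : 0 < c₁) (hc₂ : 0 < c₂) (hR : 0 < R)
    (hbound : ∀ x : Fin n → ℝ, R < ‖x‖ →
      c₁ * P f x ≤ eval x f ∧ eval x f ≤ c₂ * P f x) :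
    Nondeg f ∧ ∀ x : Fin n → ℝ, R < ‖x‖ → 0 ≤ eval x f :=
  stmt9_general f hf c₁ c₂ R hc₁ hbound
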